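/- Let ν be a σ-finite measure on a measurable space 𝒳, let h : 𝒳 → [0, ∞) and T : 𝒳 → ℝ^d be measurable, let W : ℝ^d → ℝ be twice continuously differentiable, and for θ ∈ ℝ^d write E_θ(x) := h(x)·exp(⟨θ, T(x)⟩ - W(θ)). Let Θ ⊆ ℝ^d be a convex set on which the family is normalized (∫ E_θ dν = 1 for every θ ∈ Θ), with P_θ the probability measure with ν-density E_θ. Let L ≥ 1, β ≥ 1, 0 < κ ≤ 1, λ > 0, ε ∈ (0,1), γ ≥ e², and t > 0 be real numbers, and suppose for every θ ∈ Θ: ‖∇W(θ)‖ ≤ L, κ‖v‖² ≤ ⟨v, ∇²W(θ) v⟩ ≤ λ‖v‖² for all v ∈ ℝ^d, and ∇W(θ) = ∫ T(x) dP_θ(x). Let θ₁, θ₂, θ* ∈ Θ satisfy: (i) ‖θ₁ - θ₂‖ ≥ √( (3·(16·max(L,β)·β + λ)/(κβ²)) · log(γ/ε) ); (ii) ‖θ₁ - θ*‖ ≤ ε/(2β); and (iii) the open Euclidean ball B((θ₁ + θ₂)/2, 1/(2β)) is contained in Θ. Then P_{θ*}[{x ∈ 𝒳 : E_{θ₁}(x)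 > t · E_{θ₂}(x)}] ≥ 1 - √t · (ε/γ)². -/

import Mathlib

/-!
On the event `E θ₁ ≤ t · E θ₂` we have `1 ≤ √t · √(E θ₂ / E θ₁)`, and in an exponential family
`E θs · √(E θ₂ / E θ₁) = e^G · E θ'` with `θ' = θs + (θ₂ - θ₁) / 2` and
`G = W θ' - W θs + (W θ₁ - W θ₂) / 2`. Integrating against `ν`, the event has `P θs`-probability
at most `√t · e^G`. Strong convexity puts `W` at the midpoint of `θ₁, θ₂` at least
`κ ‖θ₁ - θ₂‖² / 8` below the chord, and `θ'` is that midpoint shifted by `θs - θ₁`, which the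
gradient bound makes cheap; so `G ≤ L ε / β - κ ‖θ₁ - θ₂‖² / 8`, and the separation turns this
into `G ≤ 2 log (ε / γ)`.
-/

open MeasureTheory Real

open scoped ENNReal

section LineRestriction

variable {F : Type*} [NormedAddCommGroup F] [NormedSpace ℝ F] {W : F → ℝ}

theorem hasDerivAt_const_add_smul (x v : F) (s : ℝ) :
    HasDerivAt (fun r : ℝ => x + r • v) v s :=
  ((hasDerivAt_id s).smul_const v).const_add x |>.congr_deriv (one_smul ℝ v)

theorem Differentiable.hasDerivAt_comp_line (hW : Differentiable ℝ W) (x v : F) (s : ℝ) :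
    HasDerivAt (fun r : ℝ => W (x + r • v)) (fderiv ℝ W (x + s • v) v) s :=
  (hW _).hasFDerivAt.comp_hasDerivAt s (hasDerivAt_const_add_smul x v s)

theorem ContDiff.hasDerivAt_fderiv_comp_line (hW : ContDiff ℝ 2 W) (x v : F) (s : ℝ) :
    HasDerivAt (fun r : ℝ => fderiv ℝ W (x + r • v) v)
      (iteratedFDeriv ℝ 2 W (x + s • v) ![v, v]) s := by
  rw [iteratedFDeriv_two_apply]
  exact (ContinuousLinearMap.apply ℝ ℝ v).hasFDerivAt.comp_hasDerivAt s
    (((hW.fderiv_right le_rfl).differentiable one_ne_zero _).hasFDerivAt.comp_hasDerivAt s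
      (hasDerivAt_const_add_smul x v s))

theorem midpoint_le_of_le_iteratedFDeriv_two (hW : ContDiff ℝ 2 W) {S : Set F}
    (hS : Convex ℝ S) {x y : F} (hx : x ∈ S) (hy : y ∈ S) {c : ℝ}
    (hc : ∀ z ∈ S, c ≤ iteratedFDeriv ℝ 2 W z ![y - x, y - x]) :
    W (midpoint ℝ x y) ≤ (W x + W y) / 2 - c / 8 := by
  set v := y - x
  have hseg : ∀ s ∈ Set.Icc (0 : ℝ) 1, x + s • v ∈ S := fun s hs => by
    convert hS.add_smul_sub_mem hx hy hs using 1
  have hconv : ConvexOn ℝ (Set.Icc 0 1) fun s : ℝ => W (x + s • v) - c / 2 * s ^ 2 := by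
    refine convexOn_of_hasDerivWithinAt2_nonneg (convex_Icc 0 1)
      (f' := fun s => fderiv ℝ W (x + s • v) v - c * s)
      (f'' := fun s => iteratedFDeriv ℝ 2 W (x + s • v) ![v, v] - c) ?_ ?_ ?_ ?_
    · exact ((hW.continuous.comp (by fun_prop)).sub (by fun_prop)).continuousOn
    · intro s _
      refine ((hW.differentiable two_ne_zero).hasDerivAt_comp_line x v s |>.sub ?_).hasDerivWithinAt
      exact (hasDerivAt_pow 2 s).const_mul (c / 2) |>.congr_deriv (by ring)
    · intro s _
      exact ((hW.hasDerivAt_fderiv_comp_line x v s).sub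
        ((hasDerivAt_id s).const_mul c |>.congr_deriv (mul_one c))).hasDerivWithinAt
    · intro s hs
      exact sub_nonneg.2 (hc _ (hseg s (interior_subset hs)))
  have hhalf := hconv.2 (⟨le_rfl, zero_le_one⟩ : (0 : ℝ) ∈ Set.Icc 0 1) ⟨zero_le_one, le_rfl⟩
    (by norm_num : (0 : ℝ) ≤ 1 / 2) (by norm_num : (0 : ℝ) ≤ 1 / 2) (by norm_num)
  have hmid : midpoint ℝ x y = x + (1 / 2 : ℝ) • v := by
    rw [midpoint_eq_smul_add, invOf_eq_inv]; module
  norm_num [v] at hhalf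
  rw [hmid]
  linarith

end LineRestriction

section HalfTilt

variable {F : Type*} [AddCommGroup F] [Module ℝ F]

theorem add_half_smul_sub_sub_midpoint (θ₁ θ₂ θ : F) :
    θ + (1 / 2 : ℝ) • (θ₂ - θ₁) - midpoint ℝ θ₁ θ₂ = θ - θ₁ := by
  rw [midpoint_eq_smul_add, invOf_eq_inv]; module

/-- `log ∫ √(E θ₂ / E θ₁) dP_θ` for a normalized exponential family with log-partition `W`. -/
noncomputable def halfTiltExponent (W : F → ℝ) (θ₁ θ₂ θ : F) : ℝ :=
  W (θ + (1 / 2 : ℝ) • (θ₂ - θ₁)) - W θ + (W θ₁ - W θ₂) / 2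

end HalfTilt

section Potential

variable {F : Type*} [NormedAddCommGroup F] [InnerProductSpace ℝ F] [CompleteSpace F]
  {W : F → ℝ} {Θ : Set F} {L : ℝ}

theorem Convex.sub_le_mul_norm_of_norm_gradient_le (hΘ : Convex ℝ Θ) (hW : Differentiable ℝ W)
    (hL : ∀ θ ∈ Θ, ‖gradient W θ‖ ≤ L) {x y : F} (hx : x ∈ Θ) (hy : y ∈ Θ) :
    W y - W x ≤ L * ‖y - x‖ := by
  have hL' : ∀ θ ∈ Θ, ‖fderiv ℝ W θ‖ ≤ L := fun θ hθ => by
    simpa [gradient] using hL θ hθ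
  exact (le_abs_self _).trans
    (hΘ.norm_image_sub_le_of_norm_fderiv_le (fun θ _ => hW θ) hL' hx hy)

theorem halfTiltExponent_le {κ : ℝ} (hW : ContDiff ℝ 2 W) (hΘ : Convex ℝ Θ)
    (hL : ∀ θ ∈ Θ, ‖gradient W θ‖ ≤ L)
    (hκ : ∀ θ ∈ Θ, ∀ v, κ * ‖v‖ ^ 2 ≤ iteratedFDeriv ℝ 2 W θ ![v, v])
    {θ₁ θ₂ θ : F} (h₁ : θ₁ ∈ Θ) (h₂ : θ₂ ∈ Θ) (hθ : θ ∈ Θ) (hmid : midpoint ℝ θ₁ θ₂ ∈ Θ)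
    (htilt : θ + (1 / 2 : ℝ) • (θ₂ - θ₁) ∈ Θ) :
    halfTiltExponent W θ₁ θ₂ θ ≤ 2 * L * ‖θ₁ - θ‖ - κ * ‖θ₁ - θ₂‖ ^ 2 / 8 := by
  have hdiff := hW.differentiable two_ne_zero
  have hconv := midpoint_le_of_le_iteratedFDeriv_two hW hΘ h₁ h₂ fun z hz => hκ z hz (θ₂ - θ₁)
  have hlip₁ := hΘ.sub_le_mul_norm_of_norm_gradient_le hdiff hL hmid htilt
  have hlip₂ := hΘ.sub_le_mul_norm_of_norm_gradient_le hdiff hL hθ h₁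
  rw [add_half_smul_sub_sub_midpoint, norm_sub_rev] at hlip₁
  rw [norm_sub_rev θ₂] at hconv
  unfold halfTiltExponent
  linarith

end Potential

section Measure

variable {X : Type*} [MeasurableSpace X] {μ : Measure X}

theorem withDensity_apply_le_mul_lintegral {f g : X → ℝ≥0∞} {S : Set X} {c : ℝ≥0∞}
    (hS : MeasurableSet S) (hc : c ≠ ∞) (hfg : ∀ x ∈ S, f x ≤ c * g x) :
    μ.withDensity f S ≤ c * ∫⁻ x, g x ∂μ := by
  rw [withDensity_apply _ hS, ← lintegral_const_mul' c g hc]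
  exact (setLIntegral_mono' hS hfg).trans (setLIntegral_le_lintegral _ _)

theorem lintegral_ofReal_eq_one {f : X → ℝ} (hf : ∀ x, 0 ≤ f x) (h : ∫ x, f x ∂μ = 1) :
    ∫⁻ x, ENNReal.ofReal (f x) ∂μ = 1 := by
  rw [← ofReal_integral_eq_lintegral_ofReal (.of_integral_ne_zero (h ▸ one_ne_zero))
    (.of_forall hf), h, ENNReal.ofReal_one]

theorem isProbabilityMeasure_withDensity_ofReal {f : X → ℝ} (hf : ∀ x, 0 ≤ f x)
    (h : ∫ x, f x ∂μ = 1) : IsProbabilityMeasure (μ.withDensity fun x => ENNReal.ofReal (f x)) :=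
  ⟨by rw [withDensity_apply _ .univ, Measure.restrict_univ, lintegral_ofReal_eq_one hf h]⟩

theorem ofReal_one_sub_le_prob_compl [IsProbabilityMeasure μ] {S : Set X} (hS : MeasurableSet S)
    {r : ℝ} (hr : 0 ≤ r) (hμS : μ S ≤ ENNReal.ofReal r) : ENNReal.ofReal (1 - r) ≤ μ Sᶜ := by
  rw [prob_compl_eq_one_sub hS, ENNReal.ofReal_sub _ hr, ENNReal.ofReal_one]
  exact tsub_le_tsub_left hμS 1

end Measure

section ExponentialFamily

variable {X F : Type*} [NormedAddCommGroup F] [InnerProductSpace ℝ F]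
  {h : X → ℝ} {T : X → F} {W : F → ℝ}

noncomputable def expFamilyDensity (h : X → ℝ) (T : X → F) (W : F → ℝ) (θ : F) (x : X) : ℝ :=
  h x * exp (inner ℝ θ (T x) - W θ)

theorem expFamilyDensity_nonneg {x : X} (hx : 0 ≤ h x) (T : X → F) (W : F → ℝ) (θ : F) :
    0 ≤ expFamilyDensity h T W θ x :=
  mul_nonneg hx (exp_pos _).le

theorem measurable_expFamilyDensity [MeasurableSpace X] [MeasurableSpace F]
    [OpensMeasurableSpace F] (hh : Measurable h) (hT : Measurable T) (W : F → ℝ) (θ : F) :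
    Measurable (expFamilyDensity h T W θ) :=
  hh.mul ((((continuous_const.inner continuous_id).measurable.comp hT).sub_const _).exp)

theorem expFamilyDensity_le_of_le_mul {x : X} (hx : 0 ≤ h x) {θ₁ θ₂ : F} {t : ℝ}
    (hle : expFamilyDensity h T W θ₁ x ≤ t * expFamilyDensity h T W θ₂ x) (θ : F) :
    expFamilyDensity h T W θ x ≤
      √t * exp (halfTiltExponent W θ₁ θ₂ θ) *
        expFamilyDensity h T W (θ + (1 / 2 : ℝ) • (θ₂ - θ₁)) x := by
  rcases hx.eq_or_lt with h0 | hpos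
  · simp [expFamilyDensity, ← h0]
  set a : F → ℝ := fun θ => inner ℝ θ (T x) - W θ
  have hratio : exp (a θ₁ - a θ₂) ≤ t := by
    rw [exp_sub, div_le_iff₀ (exp_pos _)]
    simpa only [expFamilyDensity, mul_left_comm t, mul_le_mul_iff_right₀ hpos] using hle
  have hexponent : a θ = (a θ₁ - a θ₂) / 2 + halfTiltExponent W θ₁ θ₂ θ
      + a (θ + (1 / 2 : ℝ) • (θ₂ - θ₁)) := by
    simp only [a, halfTiltExponent, inner_add_left, real_inner_smul_left, inner_sub_left]
    ring
  calc expFamilyDensity h T W θ x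
      = exp ((a θ₁ - a θ₂) / 2) * exp (halfTiltExponent W θ₁ θ₂ θ) *
          expFamilyDensity h T W (θ + (1 / 2 : ℝ) • (θ₂ - θ₁)) x := by
        simp only [expFamilyDensity]
        rw [show inner ℝ θ (T x) - W θ = a θ from rfl, hexponent, exp_add, exp_add]
        ring
    _ ≤ _ := by
        gcongr
        · exact expFamilyDensity_nonneg hx T W _
        rw [exp_half]
        exact sqrt_le_sqrt hratio

theorem withDensity_expFamilyDensity_setOf_le_mul_le [MeasurableSpace X] {ν : Measure X}
    (hh : ∀ x, 0 ≤ h x) {θ₁ θ₂ θ : F} {t : ℝ}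
    (hS : MeasurableSet {x | expFamilyDensity h T W θ₁ x ≤ t * expFamilyDensity h T W θ₂ x})
    (hnorm : ∫ x, expFamilyDensity h T W (θ + (1 / 2 : ℝ) • (θ₂ - θ₁)) x ∂ν = 1) :
    ν.withDensity (fun x => ENNReal.ofReal (expFamilyDensity h T W θ x))
        {x | expFamilyDensity h T W θ₁ x ≤ t * expFamilyDensity h T W θ₂ x} ≤
      ENNReal.ofReal (√t * exp (halfTiltExponent W θ₁ θ₂ θ)) := by
  refine (withDensity_apply_le_mul_lintegral hS ENNReal.ofReal_ne_top fun x hx => ?_).trans_eq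
    (by rw [lintegral_ofReal_eq_one (fun x => expFamilyDensity_nonneg (hh x) T W _) hnorm,
      mul_one])
  rw [← ENNReal.ofReal_mul (by positivity)]
  exact ENNReal.ofReal_le_ofReal (expFamilyDensity_le_of_le_mul (hh x) hx θ)

end ExponentialFamily

theorem sub_le_neg_two_mul_of_sqrt_le {L β κ lam ε ℓ D : ℝ} (hL : 0 ≤ L) (hβ : 0 < β)
    (hκ : 0 < κ) (hlam : 0 ≤ lam) (hε : ε ≤ 1) (hℓ : 2 ≤ ℓ)
    (hD : √(3 * (16 * max L β * β + lam) / (κ * β ^ 2) * ℓ) ≤ D) :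
    L * (ε / β) - κ * D ^ 2 / 8 ≤ -2 * ℓ := by
  set M := max L β
  have hLM : L ≤ M := le_max_left L β
  have hβM : β ≤ M := le_max_right L β
  have hsq : 3 * (16 * M * β + lam) * ℓ ≤ κ * β ^ 2 * D ^ 2 := by
    have := (sqrt_le_iff.mp hD).2
    rwa [div_mul_eq_mul_div, div_le_iff₀ (by positivity), mul_comm (D ^ 2)] at this
  have hkey : 48 * M * ℓ ≤ κ * β * D ^ 2 := by
    refine le_of_mul_le_mul_right ?_ hβ
    nlinarith [mul_nonneg hlam (by linarith : (0 : ℝ) ≤ ℓ)]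
  have hsum : L * ε + 2 * β * ℓ ≤ κ * β * D ^ 2 / 8 := by nlinarith
  rw [mul_div_assoc', div_sub' hβ.ne', div_le_iff₀ hβ]
  linarith

theorem stmt_16_general {d : ℕ} {𝒳 : Type*} [MeasurableSpace 𝒳]
    (ν : Measure 𝒳)
    (h : 𝒳 → ℝ) (hh_nonneg : ∀ x, 0 ≤ h x) (hh_meas : Measurable h)
    (T : 𝒳 → EuclideanSpace ℝ (Fin d)) (hT_meas : Measurable T)
    (W : EuclideanSpace ℝ (Fin d) → ℝ) (hW : ContDiff ℝ 2 W)
    (E : EuclideanSpace ℝ (Fin d) → 𝒳 → ℝ)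
    (hE : ∀ θ x, E θ x = h x * Real.exp ((inner ℝ θ (T x) : ℝ) - W θ))
    (Θ : Set (EuclideanSpace ℝ (Fin d))) (hΘ : Convex ℝ Θ)
    (hnorm : ∀ θ ∈ Θ, ∫ x, E θ x ∂ν = 1)
    (P : EuclideanSpace ℝ (Fin d) → Measure 𝒳)
    (hP : ∀ θ, P θ = ν.withDensity (fun x => ENNReal.ofReal (E θ x)))
    (L β κ lam ε γ t : ℝ)
    (hL : 1 ≤ L) (hβ : 1 ≤ β) (hκ0 : 0 < κ) (hlam : 0 < lam)
    (hε0 : 0 < ε) (hε1 : ε < 1) (hγ : Real.exp 2 ≤ γ)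
    (hgradL : ∀ θ ∈ Θ, ‖gradient W θ‖ ≤ L)
    (hhess : ∀ θ ∈ Θ, ∀ v : EuclideanSpace ℝ (Fin d),
      κ * ‖v‖ ^ 2 ≤ iteratedFDeriv ℝ 2 W θ ![v, v] ∧
        iteratedFDeriv ℝ 2 W θ ![v, v] ≤ lam * ‖v‖ ^ 2)
    (θ₁ θ₂ θs : EuclideanSpace ℝ (Fin d))
    (hθ₁ : θ₁ ∈ Θ) (hθ₂ : θ₂ ∈ Θ) (hθs : θs ∈ Θ)
    (hsep : ‖θ₁ - θ₂‖ ≥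
      Real.sqrt ((3 * (16 * max L β * β + lam) / (κ * β ^ 2)) * Real.log (γ / ε)))
    (hclose : ‖θ₁ - θs‖ ≤ ε / (2 * β))
    (hball : Metric.ball ((1 / 2 : ℝ) • (θ₁ + θ₂)) (1 / (2 * β)) ⊆ Θ) :
    ENNReal.ofReal (1 - Real.sqrt t * (ε / γ) ^ 2) ≤
      P θs {x | t * E θ₂ x < E θ₁ x} := by
  obtain rfl : E = expFamilyDensity h T W := funext₂ hE
  have hβ0 : 0 < β := by linarith
  have hγ0 : 0 < γ := (exp_pos 2).trans_le hγ
  rw [show (1 / 2 : ℝ) • (θ₁ + θ₂) = midpoint ℝ θ₁ θ₂ by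
    rw [midpoint_eq_smul_add, invOf_eq_inv, one_div]] at hball
  have hmid : midpoint ℝ θ₁ θ₂ ∈ Θ := hball (Metric.mem_ball_self (by positivity))
  have htilt : θs + (1 / 2 : ℝ) • (θ₂ - θ₁) ∈ Θ := hball <| by
    rw [Metric.mem_ball, dist_eq_norm, add_half_smul_sub_sub_midpoint, norm_sub_rev]
    exact hclose.trans_lt (by gcongr)
  have hℓ : 2 ≤ log (γ / ε) :=
    (le_log_iff_exp_le (by positivity)).2 (hγ.trans (le_div_self hγ0.le hε0 hε1.le))
  have hexp : exp (halfTiltExponent W θ₁ θ₂ θs) ≤ (ε / γ) ^ 2 := by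
    have hG := halfTiltExponent_le hW hΘ hgradL (fun θ hθ v => (hhess θ hθ v).1) hθ₁ hθ₂ hθs
      hmid htilt
    have hsep' := sub_le_neg_two_mul_of_sqrt_le (by linarith) hβ0 hκ0 hlam.le hε1.le hℓ hsep
    have hclose' : 2 * L * ‖θ₁ - θs‖ ≤ L * (ε / β) :=
      calc 2 * L * ‖θ₁ - θs‖ ≤ 2 * L * (ε / (2 * β)) := by gcongr
        _ = L * (ε / β) := by ring
    rw [← exp_log (by positivity : 0 < (ε / γ) ^ 2), log_pow, ← inv_div, log_inv]
    gcongr; push_cast; linarith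
  have hS := measurableSet_le (measurable_expFamilyDensity hh_meas hT_meas W θ₁)
    ((measurable_expFamilyDensity hh_meas hT_meas W θ₂).const_mul t)
  have hbad := (withDensity_expFamilyDensity_setOf_le_mul_le hh_nonneg hS (hnorm _ htilt)).trans
    (ENNReal.ofReal_le_ofReal (mul_le_mul_of_nonneg_left hexp (sqrt_nonneg t)))
  have := isProbabilityMeasure_withDensity_ofReal
    (fun x => expFamilyDensity_nonneg (hh_nonneg x) T W θs) (hnorm θs hθs)
  rw [hP]
  simpa only [Set.compl_ofPred, not_le] using
    ofReal_one_sub_le_prob_compl hS (by positivity) hbad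

theorem stmt_16 {d : ℕ} {𝒳 : Type*} [MeasurableSpace 𝒳]
    (ν : Measure 𝒳) [SigmaFinite ν]
    (h : 𝒳 → ℝ) (hh_nonneg : ∀ x, 0 ≤ h x) (hh_meas : Measurable h)
    (T : 𝒳 → EuclideanSpace ℝ (Fin d)) (hT_meas : Measurable T)
    (W : EuclideanSpace ℝ (Fin d) → ℝ) (hW : ContDiff ℝ 2 W)
    (E : EuclideanSpace ℝ (Fin d) → 𝒳 → ℝ)
    (hE : ∀ θ x, E θ x = h x * Real.exp ((inner ℝ θ (T x) : ℝ) - W θ))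
    (Θ : Set (EuclideanSpace ℝ (Fin d))) (hΘ : Convex ℝ Θ)
    (hnorm : ∀ θ ∈ Θ, ∫ x, E θ x ∂ν = 1)
    (P : EuclideanSpace ℝ (Fin d) → Measure 𝒳)
    (hP : ∀ θ, P θ = ν.withDensity (fun x => ENNReal.ofReal (E θ x)))
    (L β κ lam ε γ t : ℝ)
    (hL : 1 ≤ L) (hβ : 1 ≤ β) (hκ0 : 0 < κ) (hκ1 : κ ≤ 1) (hlam : 0 < lam)
    (hε0 : 0 < ε) (hε1 : ε < 1) (hγ : Real.exp 2 ≤ γ) (ht : 0 < t)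
    (hgradL : ∀ θ ∈ Θ, ‖gradient W θ‖ ≤ L)
    (hhess : ∀ θ ∈ Θ, ∀ v : EuclideanSpace ℝ (Fin d),
      κ * ‖v‖ ^ 2 ≤ iteratedFDeriv ℝ 2 W θ ![v, v] ∧
        iteratedFDeriv ℝ 2 W θ ![v, v] ≤ lam * ‖v‖ ^ 2)
    (hgrad : ∀ θ ∈ Θ, gradient W θ = ∫ x, T x ∂(P θ))
    (θ₁ θ₂ θs : EuclideanSpace ℝ (Fin d))
    (hθ₁ : θ₁ ∈ Θ) (hθ₂ : θ₂ ∈ Θ) (hθs : θs ∈ Θ)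
    (hsep : ‖θ₁ - θ₂‖ ≥
      Real.sqrt ((3 * (16 * max L β * β + lam) / (κ * β ^ 2)) * Real.log (γ / ε)))
    (hclose : ‖θ₁ - θs‖ ≤ ε / (2 * β))
    (hball : Metric.ball ((1 / 2 : ℝ) • (θ₁ + θ₂)) (1 / (2 * β)) ⊆ Θ) :
    ENNReal.ofReal (1 - Real.sqrt t * (ε / γ) ^ 2) ≤
      P θs {x | t * E θ₂ x < E θ₁ x} :=
  stmt_16_general ν h hh_nonneg hh_meas T hT_meas W hW E hE Θ hΘ hnorm P hP L β κ lam ε γ t hL hβ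
    hκ0 hlam hε0 hε1 hγ hgradL hhess θ₁ θ₂ θs hθ₁ hθ₂ hθs hsep hclose hball
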